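/- arXiv:2502.09065 — 4 statements merged into one kernel-verified Lean document; each statement's English description precedes it below -/
import Mathlib

section
/- Consider the hybrid decoding algorithm with hard decision decoders as pre- and post-decoders. Let n be a positive integer, C ⊆ {0,1}^n a code, t_c a natural number, and let (Ω, P) be a probability space carrying random variables X : Ω → C (the transmitted codeword) and Y : Ω → ℝ^n (the received vector), with all maps below measurable. Let g : ℝ^n → {0,1}^n be the ECCT codeword-estimate map and model the pre-decoder as f_pre : ℝ^n → Option({0,1}^n), where f_pre(y) = some c means the pre-decoder outputs the codeword c and f_pre(y) = none means it declares failure (nonzero syndrome) and passes y on. Assume: (i) almost surely, if d_H(X, Ỹ) ≤ t_c then f_pre(Y) = some X (the pre-decoder corrects all error patterns of weight at most t_c); (ii) almost surely, the post-decoder f_post : {0,1}^n → {0,1}^n satisfies f_post(g(Y)) = X when d_H(X, g(Y)) ≤ t_c and f_post(g(Y)) = g(Y) when d_H(X, g(Y)) > t_c (the post-decoder corrects exactly the patterns with at most t_c residual errors and otherwise returns its input). Define the hybrid output X̂ = c if f_pre(Y) = some c, and X̂ = f_post(g(Y)) if f_pre(Y) = none. Let P_dd = P(f_pre(Y) = none)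 (decoding failure probability for detected errors) and P_bu = E[ d_H(X, X̂) · 1{f_pre(Y) = some c for some c ≠ X} ] (bit error probability due to undetected errors of the pre-decoder). Then E[ d_H(X, X̂) ] = P_dd · E[ u( d_H(X, g(Y)) − t_c ) · d_H(X, g(Y)) | f_pre(Y) = none ] + P_bu. -/
/-!
Split `E[d_H(X, X̂)]` over the detection event `A = {f_pre Y = none}` and its complement.
On `A` the output is `f_post (g Y)`, whose distance to `X` is `0` when at most `t_c` errors
remain and `d_H(X, g Y)` otherwise, i.e. `u(d_H(X, g Y) − t_c) · d_H(X, g Y)`; and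
`P(A) · E[· | A]` is the integral over `A`. Off `A` the output is the pre-decoder's codeword,
which contributes only when it differs from `X`, giving `P_bu`.
-/

open MeasureTheory Real

/-- `sgn α = 1` if `α ≥ 0` and `−1` otherwise. -/
noncomputable def sgn (α : ℝ) : ℝ := if 0 ≤ α then 1 else -1

/-- `bin α = (1 − α)/2`. -/
noncomputable def bin (α : ℝ) : ℝ := (1 - α) / 2

/-- `hardBit α` is the Boolean encoding (false ↔ 0, true ↔ 1) of `bin (sgn α)`. -/
noncomputable def hardBit (α : ℝ) : Bool := if 0 ≤ α then false else true

/-- Real value of a bit (false ↔ 0, true ↔ 1). -/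
def bitVal (b : Bool) : ℝ := if b then 1 else 0

/-- The step function `u`: `u α = 0` if `α ≤ 0` and `1` otherwise. -/
noncomputable def stepu (α : ℝ) : ℝ := if α ≤ 0 then 0 else 1

/-- The sigmoid `σ α = 1/(1 + e^{−α})`. -/
noncomputable def sigm (α : ℝ) : ℝ := 1 / (1 + Real.exp (-α))

/-- The 0–1 loss. -/
noncomputable def l01 (α : ℝ) : ℝ := if α ≤ 0 then 1 else 0

/-- Binary cross entropy loss `l_BCE(x, w)` with binarized multiplicative noise
`z̃ᵢ = bin (sgn ((1 − 2 xᵢ) yᵢ))`, natural logarithms. -/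
noncomputable def lBCE (n : ℕ) (x : Fin n → Bool) (y : Fin n → ℝ) (w : Fin n → ℝ) : ℝ :=
  -∑ i, (bin (sgn ((1 - 2 * bitVal (x i)) * y i)) * Real.log (1 - sigm (w i))
        + (1 - bin (sgn ((1 - 2 * bitVal (x i)) * y i))) * Real.log (sigm (w i)))

lemma stepu_sub_mul_eq_of_le {a b : ℝ} (h : a ≤ b) : stepu (a - b) * a = 0 := by
  simp [stepu, sub_nonpos.mpr h]

lemma stepu_sub_mul_eq_of_lt {a b : ℝ} (h : b < a) : stepu (a - b) * a = a := by
  simp [stepu, not_le.mpr (sub_pos.mpr h)]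

lemma hammingDist_post_eq_stepu_mul {ι β : Type*} [Fintype ι] [DecidableEq β] {x z p : ι → β}
    {t : ℕ} (hcorrect : hammingDist x z ≤ t → p = x) (hkeep : t < hammingDist x z → p = z) :
    (hammingDist x p : ℝ) = stepu ((hammingDist x z : ℝ) - t) * hammingDist x z := by
  rcases le_or_gt (hammingDist x z) t with hle | hlt
  · rw [hcorrect hle, hammingDist_self, Nat.cast_zero,
      stepu_sub_mul_eq_of_le (Nat.cast_le.mpr hle)]
  · rw [hkeep hlt, stepu_sub_mul_eq_of_lt (Nat.cast_lt.mpr hlt)]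

lemma integrable_hammingDist {Ω ι β : Type*} [MeasurableSpace Ω] {μ : Measure Ω}
    [IsFiniteMeasure μ] [Fintype ι] [DecidableEq β] [Countable β] [MeasurableSpace β]
    [MeasurableSingletonClass β] {U V : Ω → ι → β} (hU : Measurable U) (hV : Measurable V) :
    Integrable (fun ω => (hammingDist (U ω) (V ω) : ℝ)) μ := by
  have hmeas : Measurable fun ω => (hammingDist (U ω) (V ω) : ℝ) := by fun_prop
  refine .of_bound hmeas.aestronglyMeasurable (Fintype.card ι) (.of_forall fun ω => ?_)
  rw [Real.norm_natCast]
  exact_mod_cast hammingDist_le_card_fintype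

lemma toReal_measure_smul_integral_cond {Ω E : Type*} [MeasurableSpace Ω] [NormedAddCommGroup E]
    [NormedSpace ℝ E] {μ : Measure Ω} {s : Set Ω} (hs : μ s ≠ ⊤) (f : Ω → E) :
    (μ s).toReal • ∫ ω, f ω ∂(ProbabilityTheory.cond μ s) = ∫ ω in s, f ω ∂μ := by
  rcases eq_or_ne (μ s) 0 with h0 | h0
  · simp [h0, Measure.restrict_eq_zero.mpr h0]
  · rw [ProbabilityTheory.cond, integral_smul_measure, smul_smul, ENNReal.toReal_inv,
      mul_inv_cancel₀ (ENNReal.toReal_ne_zero.mpr ⟨h0, hs⟩), one_smul]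

theorem hybrid_decoder_expected_error_general
    {Ω : Type*} [MeasurableSpace Ω] (P : Measure Ω) [IsProbabilityMeasure P]
    (n : ℕ) (tc : ℕ)
    (X : Ω → Fin n → Bool) (Y : Ω → Fin n → ℝ)
    (g : (Fin n → ℝ) → Fin n → Bool)
    (fpre : (Fin n → ℝ) → Option (Fin n → Bool))
    (fpost : (Fin n → Bool) → Fin n → Bool)
    (hmX : Measurable X)
    (hmnone : MeasurableSet {ω | fpre (Y ω) = none})
    (hmhat : Measurable fun ω => (fpre (Y ω)).getD (fpost (g (Y ω))))
    -- (ii) a.s. the post-decoder corrects exactly the patterns of at most t_c errors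
    -- and otherwise returns its input:
    (hpost : ∀ᵐ ω ∂P,
      (hammingDist (X ω) (g (Y ω)) ≤ tc → fpost (g (Y ω)) = X ω) ∧
      (tc < hammingDist (X ω) (g (Y ω)) → fpost (g (Y ω)) = g (Y ω))) :
    ∫ ω, (hammingDist (X ω) ((fpre (Y ω)).getD (fpost (g (Y ω)))) : ℝ) ∂P =
      (P {ω | fpre (Y ω) = none}).toReal *
        (∫ ω, stepu ((hammingDist (X ω) (g (Y ω)) : ℝ) - (tc : ℝ)) *
            (hammingDist (X ω) (g (Y ω)) : ℝ)
          ∂(ProbabilityTheory.cond P {ω | fpre (Y ω) = none})) +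
      ∫ ω in {ω | ∃ c, c ≠ X ω ∧ fpre (Y ω) = some c},
        (hammingDist (X ω) ((fpre (Y ω)).getD (fpost (g (Y ω)))) : ℝ) ∂P := by
  rw [← integral_add_compl hmnone (integrable_hammingDist hmX hmhat), ← smul_eq_mul,
    toReal_measure_smul_integral_cond (measure_ne_top P _)]
  congr 1
  · refine setIntegral_congr_ae hmnone (hpost.mono fun ω hω hnone => ?_)
    rw [Set.mem_ofPred_eq.mp hnone, Option.getD_none]
    exact hammingDist_post_eq_stepu_mul hω.1 hω.2
  · refine setIntegral_eq_of_subset_of_forall_sdiff_eq_zero hmnone.compl ?_ ?_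
    · rintro ω ⟨c, -, hc⟩
      simp [hc]
    · rintro ω ⟨hsome, hnot_wrong⟩
      obtain ⟨c, hc⟩ := Option.ne_none_iff_exists'.mp hsome
      obtain rfl : c = X ω := by_contra fun hne => hnot_wrong ⟨c, hne, hc⟩
      simp [hc]

/-- Lemma 1: for the hybrid decoder with hard decision pre- and
post-decoders, with hybrid output `X̂ = (f_pre Y).getD (f_post (g Y))`,
`E[d_H(X, X̂)] = P_dd · E[u(d_H(X, g Y) − t_c) · d_H(X, g Y) | f_pre Y = none] + P_bu`,
where `P_dd = P(f_pre Y = none)` and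
`P_bu = E[d_H(X, X̂) · 1{f_pre Y = some c for some c ≠ X}]`. -/
theorem hybrid_decoder_expected_error
    {Ω : Type*} [MeasurableSpace Ω] (P : Measure Ω) [IsProbabilityMeasure P]
    (n : ℕ) (hn : 0 < n) (C : Set (Fin n → Bool)) (tc : ℕ)
    (X : Ω → Fin n → Bool) (Y : Ω → Fin n → ℝ)
    (hXC : ∀ ω, X ω ∈ C)
    (g : (Fin n → ℝ) → Fin n → Bool)
    (fpre : (Fin n → ℝ) → Option (Fin n → Bool))
    (fpost : (Fin n → Bool) → Fin n → Bool)
    (hmX : Measurable X) (hmY : Measurable Y)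
    (hmg : Measurable fun ω => g (Y ω))
    (hmnone : MeasurableSet {ω | fpre (Y ω) = none})
    (hmsome : ∀ c : Fin n → Bool, MeasurableSet {ω | fpre (Y ω) = some c})
    (hmhat : Measurable fun ω => (fpre (Y ω)).getD (fpost (g (Y ω))))
    -- (i) a.s. the pre-decoder corrects every pattern of at most t_c errors,
    -- where Ỹ = bin (sign Y) componentwise is the hard decision of Y:
    (hpre : ∀ᵐ ω ∂P,
      hammingDist (X ω) (fun i => hardBit (Y ω i)) ≤ tc → fpre (Y ω) = some (X ω))
    -- (ii) a.s. the post-decoder corrects exactly the patterns of at most t_c errors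
    -- and otherwise returns its input:
    (hpost : ∀ᵐ ω ∂P,
      (hammingDist (X ω) (g (Y ω)) ≤ tc → fpost (g (Y ω)) = X ω) ∧
      (tc < hammingDist (X ω) (g (Y ω)) → fpost (g (Y ω)) = g (Y ω))) :
    ∫ ω, (hammingDist (X ω) ((fpre (Y ω)).getD (fpost (g (Y ω)))) : ℝ) ∂P =
      (P {ω | fpre (Y ω) = none}).toReal *
        (∫ ω, stepu ((hammingDist (X ω) (g (Y ω)) : ℝ) - (tc : ℝ)) *
            (hammingDist (X ω) (g (Y ω)) : ℝ)
          ∂(ProbabilityTheory.cond P {ω | fpre (Y ω) = none})) +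
      ∫ ω in {ω | ∃ c, c ≠ X ω ∧ fpre (Y ω) = some c},
        (hammingDist (X ω) ((fpre (Y ω)).getD (fpost (g (Y ω)))) : ℝ) ∂P :=
  hybrid_decoder_expected_error_general P n tc X Y g fpre fpost hmX hmnone hmhat hpost
end

section
/- Let n be a positive integer, x ∈ {0,1}^n, y ∈ ℝ^n with y_i ≠ 0 for every i, and let f ∈ ℝ^n be the soft decoder output. Define the estimated codeword x̂ ∈ {0,1}^n by x̂_i = bin(sign(f_i · y_i)), the multiplicative noise z̃_{s,i} = (1 − 2x_i) · y_i, its binarization z̃_i = bin(sign(z̃_{s,i})) ∈ {0,1}, and the binary cross entropy loss l_BCE(x, f) = −Σ_{i=1}^n [ z̃_i · log(1−σ(f_i)) + (1−z̃_i) · log σ(f_i) ]. Then the number of bit errors is upper bounded by the scaled binary cross entropy loss: d_H(x, x̂) ≤ (1/log 2) · l_BCE(x, f). -/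
open MeasureTheory Real

/-! Since `1 - σ t = σ (-t)`, the `i`-th BCE summand is the logistic loss `-log σ (sᵢ fᵢ)` of the
soft output signed by `sᵢ = sgn (z̃_{s,i})`. A bit error forces `sᵢ fᵢ ≤ 0` (as `yᵢ ≠ 0`), and there
`σ (sᵢ fᵢ) ≤ 1/2`, so the summand is at least `log 2`; all other summands are nonnegative. -/

open Finset

lemma sigm_eq_sigmoid : sigm = sigmoid := by
  funext t
  rw [sigm, sigmoid_def, one_div]

lemma neg_bce_term_eq_neg_log_sigm (a t : ℝ) :
    -(bin (sgn a) * log (1 - sigm t) + (1 - bin (sgn a)) * log (sigm t)) =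
      -log (sigm (sgn a * t)) := by
  rw [sigm_eq_sigmoid, ← sigmoid_neg]
  unfold sgn bin
  split_ifs <;> norm_num

lemma log_two_mul_l01_le_neg_log_sigm (t : ℝ) : log 2 * l01 t ≤ -log (sigm t) := by
  rw [sigm_eq_sigmoid]
  unfold l01
  split_ifs with ht
  · have : sigmoid t ≤ 2⁻¹ := sigmoid_zero ▸ sigmoid_le ht
    rw [mul_one, ← log_inv]
    exact log_le_log two_pos ((le_inv_comm₀ (sigmoid_pos t) two_pos).mp this)
  · simpa using log_nonpos (sigmoid_nonneg t) (sigmoid_le_one t)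

lemma sgn_mul_nonpos_of_ne_hardBit {b : Bool} {y t : ℝ} (hy : y ≠ 0)
    (h : b ≠ hardBit (t * y)) : sgn ((1 - 2 * bitVal b) * y) * t ≤ 0 := by
  rcases hy.lt_or_gt with hy | hy <;> cases b <;>
    simp only [hardBit, sgn, bitVal] at h ⊢ <;> split_ifs at h ⊢ <;> simp_all <;> nlinarith

lemma bitError_le_l01 (b : Bool) {y : ℝ} (hy : y ≠ 0) (t : ℝ) :
    (if b ≠ hardBit (t * y) then (1 : ℝ) else 0) ≤ l01 (sgn ((1 - 2 * bitVal b) * y) * t) := by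
  split_ifs with h
  · simp [l01, sgn_mul_nonpos_of_ne_hardBit hy h]
  · unfold l01; split_ifs <;> norm_num

theorem hamming_le_scaled_bce_general (n : ℕ)
    (x : Fin n → Bool) (y : Fin n → ℝ) (hy : ∀ i, y i ≠ 0) (f : Fin n → ℝ) :
    (hammingDist x (fun i => hardBit (f i * y i)) : ℝ) ≤
      (1 / Real.log 2) * lBCE n x y f := by
  rw [one_div, inv_mul_eq_div, le_div_iff₀ (log_pos one_lt_two), mul_comm]
  set s : Fin n → ℝ := fun i => sgn ((1 - 2 * bitVal (x i)) * y i)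
  calc log 2 * (hammingDist x (fun i => hardBit (f i * y i)) : ℝ)
      = ∑ i, log 2 * if x i ≠ hardBit (f i * y i) then (1 : ℝ) else 0 := by
        rw [hammingDist, natCast_card_filter, mul_sum]
    _ ≤ ∑ i, log 2 * l01 (s i * f i) := by
        gcongr with i
        exact bitError_le_l01 (x i) (hy i) (f i)
    _ ≤ ∑ i, -log (sigm (s i * f i)) :=
        sum_le_sum fun i _ => log_two_mul_l01_le_neg_log_sigm _
    _ = lBCE n x y f := by
        simp only [lBCE, ← sum_neg_distrib, neg_bce_term_eq_neg_log_sigm, s]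

/-- the number of bit errors of the hard estimate `x̂ᵢ = bin (sgn (fᵢ·yᵢ))`
is upper bounded by the scaled binary cross entropy loss `(1/log 2)·l_BCE(x, f)`. -/
theorem hamming_le_scaled_bce (n : ℕ) (hn : 0 < n)
    (x : Fin n → Bool) (y : Fin n → ℝ) (hy : ∀ i, y i ≠ 0) (f : Fin n → ℝ) :
    (hammingDist x (fun i => hardBit (f i * y i)) : ℝ) ≤
      (1 / Real.log 2) * lBCE n x y f :=
  hamming_le_scaled_bce_general n x y hy f
end

section
/- Let n be a positive integer, t_c a natural number, x ∈ {0,1}^n, y ∈ ℝ^n with y_i ≠ 0 for every i, and let f ∈ ℝ^n be the soft decoder output. Define the estimated codeword x̂ ∈ {0,1}^n by x̂_i = bin(sign(f_i · y_i)), the binarized multiplicative noise z̃_i = bin(sign((1 − 2x_i) · y_i)), and the binary cross entropy loss l_BCE(x, f) = −Σ_{i=1}^n [ z̃_i · log(1−σ(f_i)) + (1−z̃_i) · log σ(f_i) ]. Then the step-weighted bit error count is upper bounded by the step-weighted scaled binary cross entropy loss: u( d_H(x, x̂) − t_c ) · d_H(x, x̂) ≤ (1/log 2) · u( d_H(x,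 x̂) − t_c ) · l_BCE(x, f). -/
open MeasureTheory Real

lemma sigm_pos (a : ℝ) : 0 < sigm a := by unfold sigm; positivity

lemma one_sub_sigm (a : ℝ) : 1 - sigm a = sigm (-a) := by
  unfold sigm
  rw [neg_neg]
  have h1 : (0:ℝ) < 1 + Real.exp (-a) := by positivity
  have h2 : (0:ℝ) < 1 + Real.exp a := by positivity
  have h3 : Real.exp (-a) * Real.exp a = 1 := by
    rw [← Real.exp_add]; simp
  field_simp
  nlinarith [h3]

lemma log_two_le_neg_log_sigm {a : ℝ} (ha : a ≤ 0) : Real.log 2 ≤ -Real.log (sigm a) := by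
  have hpos := sigm_pos a
  have hhalf : sigm a ≤ 1/2 := by
    unfold sigm
    rw [div_le_div_iff₀ (by positivity) (by norm_num)]
    have : (1:ℝ) ≤ Real.exp (-a) := Real.one_le_exp (by linarith)
    linarith
  have h := Real.log_le_log hpos hhalf
  rw [show (1:ℝ)/2 = 2⁻¹ by norm_num, Real.log_inv] at h
  linarith

lemma neg_log_sigm_nonneg (a : ℝ) : 0 ≤ -Real.log (sigm a) := by
  have hpos := sigm_pos a
  have hle : sigm a ≤ 1 := by
    unfold sigm
    rw [div_le_one (by positivity)]
    have := Real.exp_pos (-a); linarith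
  have := Real.log_nonpos (le_of_lt hpos) hle
  linarith

lemma term_bound (xb : Bool) (yi fi : ℝ) (hy : yi ≠ 0) :
    (if xb ≠ hardBit (fi * yi) then Real.log 2 else 0) ≤
    -(bin (sgn ((1 - 2 * bitVal xb) * yi)) * Real.log (1 - sigm fi)
      + (1 - bin (sgn ((1 - 2 * bitVal xb) * yi))) * Real.log (sigm fi)) := by
  have hlog2 : (0:ℝ) ≤ Real.log 2 := Real.log_nonneg (by norm_num)
  have hnn0 : 0 ≤ -Real.log (sigm fi) := neg_log_sigm_nonneg fi
  have hnn1 : 0 ≤ -Real.log (1 - sigm fi) := by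
    rw [one_sub_sigm]; exact neg_log_sigm_nonneg _
  cases xb with
  | false =>
    have e : (1 - 2 * bitVal false) * yi = yi := by simp [bitVal]
    rw [e]
    rcases lt_or_gt_of_ne hy with hyn | hyp
    · -- yi < 0 : z = 1
      have hz : bin (sgn yi) = 1 := by
        rw [sgn, if_neg (not_le.mpr hyn)]; norm_num [bin]
      rw [hz]
      have e2 : -(1 * Real.log (1 - sigm fi) + (1 - 1) * Real.log (sigm fi))
          = -Real.log (1 - sigm fi) := by ring
      rw [e2]
      by_cases hf : 0 ≤ fi
      · have h2 : Real.log 2 ≤ -Real.log (1 - sigm fi) := by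
          rw [one_sub_sigm]; exact log_two_le_neg_log_sigm (by linarith)
        split <;> linarith
      · push_neg at hf
        have hb : hardBit (fi * yi) = false := by
          rw [hardBit, if_pos (le_of_lt (mul_pos_of_neg_of_neg hf hyn))]
        rw [hb, if_neg (by simp)]
        exact hnn1
    · -- yi > 0 : z = 0
      have hz : bin (sgn yi) = 0 := by
        rw [sgn, if_pos (le_of_lt hyp)]; norm_num [bin]
      rw [hz]
      have e2 : -(0 * Real.log (1 - sigm fi) + (1 - 0) * Real.log (sigm fi))
          = -Real.log (sigm fi) := by ring
      rw [e2]
      by_cases hf : fi ≤ 0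
      · have h2 := log_two_le_neg_log_sigm hf
        split <;> linarith
      · push_neg at hf
        have hb : hardBit (fi * yi) = false := by
          rw [hardBit, if_pos (le_of_lt (mul_pos hf hyp))]
        rw [hb, if_neg (by simp)]
        exact hnn0
  | true =>
    have e : (1 - 2 * bitVal true) * yi = -yi := by simp [bitVal]; ring
    rw [e]
    rcases lt_or_gt_of_ne hy with hyn | hyp
    · -- yi < 0, -yi > 0 : z = 0
      have hz : bin (sgn (-yi)) = 0 := by
        rw [sgn, if_pos (by linarith)]; norm_num [bin]
      rw [hz]
      have e2 : -(0 * Real.log (1 - sigm fi) + (1 - 0) * Real.log (sigm fi))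
          = -Real.log (sigm fi) := by ring
      rw [e2]
      by_cases hf : fi ≤ 0
      · have h2 := log_two_le_neg_log_sigm hf
        split <;> linarith
      · push_neg at hf
        have hb : hardBit (fi * yi) = true := by
          rw [hardBit, if_neg (not_le.mpr (mul_neg_of_pos_of_neg hf hyn))]
        rw [hb, if_neg (by simp)]
        exact hnn0
    · -- yi > 0, -yi < 0 : z = 1
      have hz : bin (sgn (-yi)) = 1 := by
        rw [sgn, if_neg (by simp; linarith)]; norm_num [bin]
      rw [hz]
      have e2 : -(1 * Real.log (1 - sigm fi) + (1 - 1) * Real.log (sigm fi))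
          = -Real.log (1 - sigm fi) := by ring
      rw [e2]
      by_cases hf : 0 ≤ fi
      · have h2 : Real.log 2 ≤ -Real.log (1 - sigm fi) := by
          rw [one_sub_sigm]; exact log_two_le_neg_log_sigm (by linarith)
        split <;> linarith
      · push_neg at hf
        have hb : hardBit (fi * yi) = true := by
          rw [hardBit, if_neg (not_le.mpr (mul_neg_of_neg_of_pos hf hyp))]
        rw [hb, if_neg (by simp)]
        exact hnn1

lemma log_two_mul_hamming_le_lBCE (n : ℕ) (x : Fin n → Bool) (y : Fin n → ℝ)
    (hy : ∀ i, y i ≠ 0) (f : Fin n → ℝ) :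
    Real.log 2 * (hammingDist x (fun i => hardBit (f i * y i)) : ℝ) ≤ lBCE n x y f := by
  have h1 : Real.log 2 * (hammingDist x (fun i => hardBit (f i * y i)) : ℝ)
      = ∑ i, (if x i ≠ hardBit (f i * y i) then Real.log 2 else 0) := by
    rw [← Finset.sum_filter]
    simp [hammingDist, Finset.sum_const, mul_comm]
  rw [h1, lBCE, ← Finset.sum_neg_distrib]
  exact Finset.sum_le_sum fun i _ => term_bound (x i) (y i) (f i) (hy i)

/-- the step-weighted bit error count is upper bounded by the
step-weighted scaled binary cross entropy loss. -/
theorem step_weighted_hamming_le_scaled_bce (n : ℕ) (hn : 0 < n) (tc : ℕ)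
    (x : Fin n → Bool) (y : Fin n → ℝ) (hy : ∀ i, y i ≠ 0) (f : Fin n → ℝ) :
    stepu ((hammingDist x (fun i => hardBit (f i * y i)) : ℝ) - (tc : ℝ)) *
        (hammingDist x (fun i => hardBit (f i * y i)) : ℝ) ≤
      (1 / Real.log 2) *
        stepu ((hammingDist x (fun i => hardBit (f i * y i)) : ℝ) - (tc : ℝ)) *
        lBCE n x y f := by
  set d : ℝ := (hammingDist x (fun i => hardBit (f i * y i)) : ℝ) with hd
  by_cases h : d - (tc : ℝ) ≤ 0
  · simp [stepu, h]
  · have hkey := log_two_mul_hamming_le_lBCE n x y hy f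
    rw [← hd] at hkey
    have hlog2 : (0:ℝ) < Real.log 2 := Real.log_pos (by norm_num)
    simp only [stepu, if_neg h, one_mul, mul_one]
    rw [div_mul_eq_mul_div, one_mul, le_div_iff₀ hlog2]
    linarith
end

section
/- (Pointwise form of Proposition 1.) Let n be a positive integer, t_c a natural number, x ∈ {0,1}^n a fixed codeword, and y ∈ ℝ^n with y_i ≠ 0 for every i. Let f_θ : ℝ^n → ℝ^n be a soft-output decoder, let g(y) ∈ {0,1}^n be given by g(y)_i = bin(sign(f_θ(y)_i · y_i)), let f_pre : ℝ^n → Option({0,1}^n) be a pre-decoder, and let f_post : {0,1}^n → {0,1}^n satisfy f_post(v) = x whenever d_H(x, v) ≤ t_c and f_post(v) = v whenever d_H(x, v) > t_c. Define the hybrid output x̂(y) = c if f_pre(y) = some c and x̂(y) = f_post(g(y)) if f_pre(y) = none. Then d_H(x, x̂(y)) ≤ 1{f_pre(y) = none} · (1/log 2) · u( d_H(x, g(y)) − t_c ) · l_BCE(x, f_θ(y)) + Σ_{c ≠ x} 1{f_pre(y) = some c} · d_H(x, c), where z̃_i = bin(sign((1 − 2x_i) · y_i)) and l_BCE(x, w)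 = −Σ_{i=1}^n [ z̃_i · log(1−σ(w_i)) + (1−z̃_i) · log σ(w_i) ] for w ∈ ℝ^n. -/
open MeasureTheory Real

lemma one_sub_sigm_s10 (w : ℝ) : 1 - sigm w = 1 / (1 + Real.exp w) := by
  unfold sigm
  have h1 : (0:ℝ) < 1 + Real.exp (-w) := by positivity
  have h2 : (0:ℝ) < 1 + Real.exp w := by positivity
  have he : Real.exp (-w) = (Real.exp w)⁻¹ := by rw [Real.exp_neg]
  rw [he] at h1 ⊢
  have hw : Real.exp w ≠ 0 := (Real.exp_pos w).ne'
  field_simp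
  ring

lemma log_one_sub_sigm (w : ℝ) : Real.log (1 - sigm w) = -Real.log (1 + Real.exp w) := by
  rw [one_sub_sigm_s10, one_div, Real.log_inv]

lemma log_sigm (w : ℝ) : Real.log (sigm w) = -Real.log (1 + Real.exp (-w)) := by
  unfold sigm; rw [one_div, Real.log_inv]

lemma log_onep_nonneg (t : ℝ) : 0 ≤ Real.log (1 + Real.exp t) :=
  Real.log_nonneg (by have := Real.exp_pos t; linarith)

lemma log_two_le (t : ℝ) (ht : 0 ≤ t) : Real.log 2 ≤ Real.log (1 + Real.exp t) := by
  apply Real.log_le_log (by norm_num)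
  have := Real.one_le_exp ht
  linarith

lemma perbit (b : Bool) (yi w : ℝ) (hyi : yi ≠ 0) :
    Real.log 2 * (if b ≠ hardBit (w * yi) then (1:ℝ) else 0) ≤
      -(bin (sgn ((1 - 2 * bitVal b) * yi)) * Real.log (1 - sigm w)
        + (1 - bin (sgn ((1 - 2 * bitVal b) * yi))) * Real.log (sigm w)) := by
  rw [log_one_sub_sigm, log_sigm]
  rcases lt_or_gt_of_ne hyi with hneg | hpos <;>
    cases b <;>
    simp only [bitVal, hardBit, sgn, bin] <;>
    split_ifs with h1 h2 <;>
    simp_all <;>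
    first
    | exact log_onep_nonneg _
    | (apply log_two_le; nlinarith)

/-- pointwise form of Proposition 1: the bit error count of the hybrid
output is upper bounded by
`1{f_pre y = none}·(1/log 2)·u(d_H(x, g y) − t_c)·l_BCE(x, f_θ y)
  + Σ_{c ≠ x} 1{f_pre y = some c}·d_H(x, c)`,
where `g(y)ᵢ = bin (sgn (f_θ(y)ᵢ · yᵢ))`. -/
theorem hybrid_error_count_le_bce_pointwise (n : ℕ) (hn : 0 < n) (tc : ℕ)
    (x : Fin n → Bool) (y : Fin n → ℝ) (hy : ∀ i, y i ≠ 0)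
    (fθ : (Fin n → ℝ) → Fin n → ℝ)
    (g : (Fin n → ℝ) → Fin n → Bool)
    (hg : ∀ w i, g w i = hardBit (fθ w i * w i))
    (fpre : (Fin n → ℝ) → Option (Fin n → Bool))
    (fpost : (Fin n → Bool) → Fin n → Bool)
    (hpost : ∀ v : Fin n → Bool,
      (hammingDist x v ≤ tc → fpost v = x) ∧ (tc < hammingDist x v → fpost v = v)) :
    (hammingDist x ((fpre y).getD (fpost (g y))) : ℝ) ≤
      (if fpre y = none then (1 : ℝ) else 0) * (1 / Real.log 2) *
        stepu ((hammingDist x (g y) : ℝ) - (tc : ℝ)) * lBCE n x y (fθ y) +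
      ∑ c ∈ Finset.univ.erase x,
        (if fpre y = some c then (1 : ℝ) else 0) * (hammingDist x c : ℝ) := by
  cases h : fpre y with
  | some c =>
    simp only [h, Option.getD_some, reduceCtorEq, if_false, zero_mul, zero_add,
      Option.some.injEq]
    have hcong : ∀ c' ∈ Finset.univ.erase x,
        (if c = c' then (1:ℝ) else 0) * (hammingDist x c' : ℝ) =
        if c = c' then (hammingDist x c' : ℝ) else 0 := by
      intro c' _; by_cases hc : c = c' <;> simp [hc]
    rw [Finset.sum_congr rfl hcong, Finset.sum_ite_eq]
    by_cases hcx : c = x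
    · subst hcx; simp
    · simp [Finset.mem_erase, hcx]
  | none =>
    simp only [h, Option.getD_none, if_true, reduceCtorEq, if_false, zero_mul,
      Finset.sum_const_zero, add_zero]
    rcases le_or_gt (hammingDist x (g y)) tc with hle | hlt
    · rw [(hpost (g y)).1 hle]
      have hstep : stepu ((hammingDist x (g y) : ℝ) - (tc : ℝ)) = 0 := by
        rw [stepu, if_pos]
        have : (hammingDist x (g y) : ℝ) ≤ (tc : ℝ) := by exact_mod_cast hle
        linarith
      simp [hstep]
    · rw [(hpost (g y)).2 hlt]
      have hstep : stepu ((hammingDist x (g y) : ℝ) - (tc : ℝ)) = 1 := by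
        rw [stepu, if_neg]
        have : (tc : ℝ) < (hammingDist x (g y) : ℝ) := by exact_mod_cast hlt
        linarith
      rw [hstep]
      have hd : (hammingDist x (g y) : ℝ) = ∑ i, (if x i ≠ g y i then (1:ℝ) else 0) := by
        rw [hammingDist, Finset.card_filter]
        push_cast
        rfl
      have hlog : 0 < Real.log 2 := Real.log_pos one_lt_two
      have key : Real.log 2 * (hammingDist x (g y) : ℝ) ≤ lBCE n x y (fθ y) := by
        rw [hd, Finset.mul_sum, lBCE, ← Finset.sum_neg_distrib]
        apply Finset.sum_le_sum
        intro i _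
        rw [hg y i]
        exact perbit (x i) (y i) (fθ y i) (hy i)
      have hre : 1 * (1 / Real.log 2) * 1 * lBCE n x y (fθ y)
          = lBCE n x y (fθ y) / Real.log 2 := by ring
      rw [hre, le_div_iff₀ hlog]
      linarith [key]
end
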